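/- arXiv:2109.13495 — 2 statements merged into one kernel-verified Lean document; each statement's English description precedes it below -/
import Mathlib

section
/- Let A be an n×n nonnegative irreducible matrix. Then there exists a vector x ∈ ℝ^n with all entries strictly positive such that A ⊗ x = μ(A)·x. -/
open Filter Topology

/-- Max-times product of two square nonnegative matrices. -/
noncomputable def mProd {m : Type*} [Fintype m] (A B : Matrix m m NNReal) : Matrix m m NNReal :=
  fun i j => Finset.univ.sup fun k => A i k * B k j

/-- Max-times powers: `mPow A 0 = I`, `mPow A (k+1) = A ⊗ mPow A k`. -/
noncomputable def mPow {m : Type*} [Fintype m] [DecidableEq m] (A : Matrix m m NNReal) :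
    ℕ → Matrix m m NNReal
  | 0 => 1
  | k + 1 => mProd A (mPow A k)

/-- Max-times action of a matrix on a nonnegative vector. -/
noncomputable def mVec {m : Type*} [Fintype m] (A : Matrix m m NNReal) (x : m → NNReal) :
    m → NNReal :=
  fun i => Finset.univ.sup fun k => A i k * x k

/-- Maximum circuit geometric mean of a nonnegative matrix. -/
noncomputable def mu {m : Type*} [Fintype m] [DecidableEq m] (A : Matrix m m NNReal) : NNReal :=
  (Finset.Icc 1 (Fintype.card m)).sup fun ℓ =>
    Finset.univ.sup fun i => (mPow A ℓ i i) ^ ((ℓ : ℝ)⁻¹)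

/-- A nonnegative matrix is irreducible if its weighted digraph is strongly connected. -/
def MaxIrreducible {m : Type*} [Fintype m] [DecidableEq m] (A : Matrix m m NNReal) : Prop :=
  ∀ i j, ∃ k : ℕ, 1 ≤ k ∧ 0 < mPow A k i j

/-! Scaling `A` by `μ(A)⁻¹` gives a matrix `B` whose circuits all have weight at most `1`,
with equality on a critical circuit through some node `v`. A walk longer than `n` revisits a
vertex, and cutting out the circuit in between does not decrease its weight; hence every power
of `B` is dominated by the Kleene plus `B⁺ = max (B, B^{⊗2}, …, B^{⊗n})`, and `B ⊗ B⁺ ≤ B⁺`.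
Conversely `B⁺_{vv} = 1`, so the column `B⁺_{·v}` also dominates its image under `B`. That
column is therefore an eigenvector of `A` for `μ(A)`, and irreducibility makes it positive. -/

noncomputable def walkWeight {m : Type*} (A : Matrix m m NNReal) (p : ℕ → m) (a b : ℕ) :
    NNReal :=
  ∏ t ∈ Finset.Ico a b, A (p t) (p (t + 1))

lemma walkWeight_mul {m : Type*} (A : Matrix m m NNReal) (p : ℕ → m) {a b c : ℕ} (hab : a ≤ b)
    (hbc : b ≤ c) : walkWeight A p a b * walkWeight A p b c = walkWeight A p a c :=
  Finset.prod_Ico_consecutive _ hab hbc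

lemma exists_lt_le_card_eq {m : Type*} [Fintype m] (p : ℕ → m) :
    ∃ s t, s < t ∧ t ≤ Fintype.card m ∧ p s = p t := by
  obtain ⟨a, b, hab, h⟩ :=
    Fintype.exists_ne_map_eq_of_card_lt (fun x : Fin (Fintype.card m + 1) => p x) (by simp)
  rcases lt_or_gt_of_ne hab with hlt | hlt
  · exact ⟨a, b, hlt, Nat.lt_succ_iff.mp b.isLt, h⟩
  · exact ⟨b, a, hlt, Nat.lt_succ_iff.mp a.isLt, h.symm⟩

lemma mVec_smul {m : Type*} [Fintype m] (c : NNReal) (A : Matrix m m NNReal) (x : m → NNReal) :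
    mVec (c • A) x = c • mVec A x := by
  ext i
  simp only [mVec, Matrix.smul_apply, smul_eq_mul, Pi.smul_apply, NNReal.mul_finset_sup, mul_assoc]

section MaxTimes

variable {m : Type*} [Fintype m] [DecidableEq m]

lemma mPow_zero (A : Matrix m m NNReal) : mPow A 0 = 1 := rfl

lemma mPow_succ_apply (A : Matrix m m NNReal) (k : ℕ) (i j : m) :
    mPow A (k + 1) i j = Finset.univ.sup fun l => A i l * mPow A k l j := rfl

lemma mul_mPow_le_mPow_succ (A : Matrix m m NNReal) (k : ℕ) (i l j : m) :
    A i l * mPow A k l j ≤ mPow A (k + 1) i j :=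
  Finset.le_sup (f := fun l => A i l * mPow A k l j) (Finset.mem_univ l)

lemma mPow_one (A : Matrix m m NNReal) : mPow A 1 = A := by
  refine Matrix.ext fun i j => ?_
  apply le_antisymm
  · rw [mPow_succ_apply]
    refine Finset.sup_le fun l _ => ?_
    rcases eq_or_ne l j with rfl | hlj
    · simp [mPow_zero]
    · simp [mPow_zero, Matrix.one_apply_ne hlj]
  · simpa [mPow_zero] using mul_mPow_le_mPow_succ A 0 i j j

lemma mul_mPow_le_mPow_add (A : Matrix m m NNReal) (a b : ℕ) (i l j : m) :
    mPow A a i l * mPow A b l j ≤ mPow A (a + b) i j := by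
  induction a generalizing i with
  | zero =>
    rcases eq_or_ne i l with rfl | hil
    · simp [mPow_zero]
    · simp [mPow_zero, Matrix.one_apply_ne hil]
  | succ a ih =>
    rw [mPow_succ_apply, NNReal.finset_sup_mul, Nat.add_right_comm]
    refine Finset.sup_le fun r _ => ?_
    calc A i r * mPow A a r l * mPow A b l j = A i r * (mPow A a r l * mPow A b l j) :=
          mul_assoc _ _ _
      _ ≤ A i r * mPow A (a + b) r j := by gcongr; exact ih r
      _ ≤ mPow A (a + b + 1) i j := mul_mPow_le_mPow_succ A _ i r j

lemma mPow_smul (c : NNReal) (A : Matrix m m NNReal) (k : ℕ) :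
    mPow (c • A) k = c ^ k • mPow A k := by
  induction k with
  | zero => simp [mPow_zero]
  | succ k ih =>
    refine Matrix.ext fun i j => ?_
    simp only [mPow_succ_apply, ih, Matrix.smul_apply, smul_eq_mul, NNReal.mul_finset_sup]
    congr 1
    funext l
    ring

lemma walkWeight_le_mPow (A : Matrix m m NNReal) (p : ℕ → m) {a b : ℕ} (hab : a ≤ b) :
    walkWeight A p a b ≤ mPow A (b - a) (p a) (p b) := by
  obtain ⟨d, rfl⟩ := Nat.exists_eq_add_of_le hab
  rw [Nat.add_sub_cancel_left]
  clear hab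
  induction d generalizing a with
  | zero => simp [walkWeight, mPow_zero]
  | succ d ih =>
    rw [walkWeight, Finset.prod_eq_prod_Ico_succ_bot (by omega), ← walkWeight,
      show a + (d + 1) = a + 1 + d by omega]
    calc A (p a) (p (a + 1)) * walkWeight A p (a + 1) (a + 1 + d)
        ≤ A (p a) (p (a + 1)) * mPow A d (p (a + 1)) (p (a + 1 + d)) := by
          gcongr; exact ih (a := a + 1)
      _ ≤ mPow A (d + 1) (p a) (p (a + 1 + d)) := mul_mPow_le_mPow_succ A d _ _ _

lemma exists_walkWeight_eq_mPow (A : Matrix m m NNReal) {k : ℕ} (hk : 1 ≤ k) (i j : m) :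
    ∃ p : ℕ → m, p 0 = i ∧ p k = j ∧ walkWeight A p 0 k = mPow A k i j := by
  induction k, hk using Nat.le_induction generalizing i with
  | base => exact ⟨fun t => if t = 0 then i else j, rfl, rfl, by simp [walkWeight, mPow_one]⟩
  | succ k hk ih =>
    obtain ⟨l, -, hl⟩ := Finset.exists_mem_eq_sup Finset.univ ⟨i, Finset.mem_univ i⟩
      fun l => A i l * mPow A k l j
    obtain ⟨q, hq0, hqk, hq⟩ := ih l
    refine ⟨fun t => if t = 0 then i else q (t - 1), rfl, by simp [hqk], ?_⟩
    rw [mPow_succ_apply, hl, ← hq, ← hq0]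
    simp only [walkWeight, ← Finset.range_eq_Ico, Finset.prod_range_succ']
    simp [mul_comm]

-- The Kleene plus `max (A, A^{⊗2}, …)`, truncated at `n`: nothing is lost once every circuit
-- has weight at most `1`.
noncomputable def kleenePlus (A : Matrix m m NNReal) : Matrix m m NNReal :=
  fun i j => (Finset.Icc 1 (Fintype.card m)).sup fun l => mPow A l i j

lemma mPow_le_kleenePlus (A : Matrix m m NNReal)
    (hcirc : ∀ l ∈ Finset.Icc 1 (Fintype.card m), ∀ i, mPow A l i i ≤ 1) {k : ℕ} (hk : 1 ≤ k)
    (i j : m) : mPow A k i j ≤ kleenePlus A i j := by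
  induction k using Nat.strong_induction_on generalizing i j with
  | _ k ih =>
  by_cases hkn : k ≤ Fintype.card m
  · exact Finset.le_sup (f := fun l => mPow A l i j) (Finset.mem_Icc.mpr ⟨hk, hkn⟩)
  obtain ⟨p, rfl, rfl, hp⟩ := exists_walkWeight_eq_mPow A hk i j
  obtain ⟨s, t, hst, htn, hpst⟩ := exists_lt_le_card_eq p
  have hcut : mPow A k (p 0) (p k) ≤ mPow A (s + (k - t)) (p 0) (p k) := calc
    mPow A k (p 0) (p k) = walkWeight A p 0 s * walkWeight A p s t * walkWeight A p t k := by
      rw [← hp, walkWeight_mul A p (Nat.zero_le s) hst.le,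
        walkWeight_mul A p (by omega) (by omega)]
    _ ≤ mPow A s (p 0) (p s) * 1 * mPow A (k - t) (p s) (p k) := by
      gcongr
      · simpa using walkWeight_le_mPow A p (Nat.zero_le s)
      · calc walkWeight A p s t ≤ mPow A (t - s) (p s) (p t) := walkWeight_le_mPow A p hst.le
          _ ≤ 1 := hpst ▸ hcirc _ (Finset.mem_Icc.mpr ⟨by omega, by omega⟩) _
      · exact hpst ▸ walkWeight_le_mPow A p (by omega)
    _ ≤ mPow A (s + (k - t)) (p 0) (p k) := by
      rw [mul_one]; exact mul_mPow_le_mPow_add A _ _ _ _ _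
  exact hcut.trans (ih _ (by omega) (by omega) _ _)

lemma mVec_kleenePlus_col (A : Matrix m m NNReal)
    (hcirc : ∀ l ∈ Finset.Icc 1 (Fintype.card m), ∀ i, mPow A l i i ≤ 1) (v : m)
    (hv : 1 ≤ kleenePlus A v v) :
    mVec A (fun j => kleenePlus A j v) = fun j => kleenePlus A j v := by
  funext j
  apply le_antisymm
  · refine Finset.sup_le fun r _ => ?_
    simp only [kleenePlus, NNReal.mul_finset_sup]
    refine Finset.sup_le fun l hl => ?_
    exact (mul_mPow_le_mPow_succ A l j r v).trans
      (mPow_le_kleenePlus A hcirc (by omega) j v)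
  · refine Finset.sup_le fun l hl => ?_
    obtain ⟨l, rfl⟩ : ∃ l', l = l' + 1 := ⟨l - 1, by grind⟩
    rw [mPow_succ_apply]
    refine Finset.sup_le fun r _ => ?_
    have hcol : mPow A l r v ≤ kleenePlus A r v := by
      rcases Nat.eq_zero_or_pos l with rfl | hl0
      · rcases eq_or_ne r v with rfl | hrv
        · simpa [mPow_zero] using hv
        · simp [mPow_zero, Matrix.one_apply_ne hrv]
      · exact mPow_le_kleenePlus A hcirc hl0 r v
    exact (mul_le_mul_right hcol _).trans
      (Finset.le_sup (f := fun r => A j r * kleenePlus A r v) (Finset.mem_univ r))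

lemma mPow_self_le_mu_pow (A : Matrix m m NNReal) {l : ℕ}
    (hl : l ∈ Finset.Icc 1 (Fintype.card m)) (i : m) : mPow A l i i ≤ mu A ^ l := by
  have hl0 : (0 : ℝ) < l := by have := (Finset.mem_Icc.mp hl).1; positivity
  rw [← NNReal.rpow_natCast, ← NNReal.rpow_inv_le_iff hl0]
  exact (Finset.le_sup (f := fun i => (mPow A l i i) ^ ((l : ℝ)⁻¹)) (Finset.mem_univ i)).trans
    (Finset.le_sup (f := fun ℓ => Finset.univ.sup fun i => (mPow A ℓ i i) ^ ((ℓ : ℝ)⁻¹)) hl)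

lemma exists_mPow_self_eq_mu_pow [Nonempty m] (A : Matrix m m NNReal) :
    ∃ ℓ ∈ Finset.Icc 1 (Fintype.card m), ∃ v, mPow A ℓ v v = mu A ^ ℓ := by
  obtain ⟨ℓ, hℓ, hsup⟩ := Finset.exists_mem_eq_sup (Finset.Icc 1 (Fintype.card m))
    (Finset.nonempty_Icc.mpr Fintype.card_pos)
    fun ℓ => Finset.univ.sup fun i => (mPow A ℓ i i) ^ ((ℓ : ℝ)⁻¹)
  obtain ⟨v, -, hv⟩ := Finset.exists_mem_eq_sup Finset.univ Finset.univ_nonempty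
    fun i => (mPow A ℓ i i) ^ ((ℓ : ℝ)⁻¹)
  refine ⟨ℓ, hℓ, v, ?_⟩
  rw [mu, hsup, hv, NNReal.rpow_inv_natCast_pow _ (by grind)]

lemma MaxIrreducible.mu_pos [Nonempty m] {A : Matrix m m NNReal} (hA : MaxIrreducible A) :
    0 < mu A := by
  obtain ⟨v⟩ := ‹Nonempty m›
  obtain ⟨k, hk, hpos⟩ := hA v v
  by_contra! hmu
  have hzero : ∀ l ∈ Finset.Icc 1 (Fintype.card m), ∀ i, mPow A l i i = 0 := fun l hl i => by
    have := mPow_self_le_mu_pow A hl i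
    rwa [nonpos_iff_eq_zero.mp hmu, zero_pow (by grind), nonpos_iff_eq_zero] at this
  have hcirc : ∀ l ∈ Finset.Icc 1 (Fintype.card m), ∀ i, mPow A l i i ≤ 1 :=
    fun l hl i => (hzero l hl i).trans_le zero_le_one
  have hplus : kleenePlus A v v ≤ 0 := Finset.sup_le fun l hl => (hzero l hl v).le
  exact hpos.not_ge ((mPow_le_kleenePlus A hcirc hk v v).trans hplus)

theorem MaxIrreducible.exists_pos_eigenvector {A : Matrix m m NNReal} (hA : MaxIrreducible A) :
    ∃ x : m → NNReal, (∀ i, 0 < x i) ∧ mVec A x = fun i => mu A * x i := by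
  cases isEmpty_or_nonempty m
  · exact ⟨fun _ => 1, isEmptyElim, funext isEmptyElim⟩
  have hμ : mu A ≠ 0 := hA.mu_pos.ne'
  obtain ⟨ℓ, hℓ, v, hv⟩ := exists_mPow_self_eq_mu_pow A
  set B := (mu A)⁻¹ • A
  have hB : ∀ l i j, mPow B l i j = mPow A l i j / mu A ^ l := fun l i j => by
    simp [B, mPow_smul, div_eq_inv_mul, inv_pow]
  have hcirc : ∀ l ∈ Finset.Icc 1 (Fintype.card m), ∀ i, mPow B l i i ≤ 1 := fun l hl i => by
    rw [hB]; exact div_le_one_of_le₀ (mPow_self_le_mu_pow A hl i) zero_le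
  have hcrit : 1 ≤ kleenePlus B v v := calc
    1 = mPow B ℓ v v := by rw [hB, hv, div_self (pow_ne_zero _ hμ)]
    _ ≤ kleenePlus B v v := mPow_le_kleenePlus B hcirc (Finset.mem_Icc.mp hℓ).1 v v
  refine ⟨fun j => kleenePlus B j v, fun j => ?_, ?_⟩
  · obtain ⟨k, hk, hpos⟩ := hA j v
    refine lt_of_lt_of_le ?_ (mPow_le_kleenePlus B hcirc hk j v)
    rw [hB]
    exact div_pos hpos (pow_pos (pos_iff_ne_zero.2 hμ) _)
  · have heig := mVec_kleenePlus_col B hcirc v hcrit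
    rw [mVec_smul] at heig
    conv_rhs => rw [← heig]
    funext i
    simp [mul_inv_cancel_left₀ hμ]

end MaxTimes

theorem stmt_6 (n : ℕ) (A : Matrix (Fin n) (Fin n) NNReal) (hA : MaxIrreducible A) :
    ∃ x : Fin n → NNReal, (∀ i, 0 < x i) ∧ mVec A x = fun i => mu A * x i :=
  hA.exists_pos_eigenvector
end

section
/- Let A be an n×n nonnegative irreducible matrix. (1) If there exist η_1 > 0 and a nonzero vector z ∈ ℝ_{≥0}^n with A ⊗ z ≥ η_1·z entrywise, then μ(A) ≥ η_1. (2) If there exist η_2 > 0 and a nonzero vector z ∈ ℝ_{≥0}^n with A ⊗ z ≤ η_2·z entrywise, then μ(A) ≤ η_2. -/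
open Filter Topology

lemma mul_fsup {ι : Type*} (s : Finset ι) (c : NNReal) (f : ι → NNReal) :
    c * s.sup f = s.sup fun k => c * f k := by
  have hmono : Monotone (c * ·) := fun x y h => mul_le_mul_right h c
  rw [Finset.comp_sup_eq_sup_comp (c * ·) (fun x y => hmono.map_sup x y) (mul_zero c)]
  rfl

lemma fsup_mul {ι : Type*} (s : Finset ι) (c : NNReal) (f : ι → NNReal) :
    s.sup f * c = s.sup fun k => f k * c := by
  rw [mul_comm, mul_fsup]; simp [mul_comm]

lemma mVec_mProd {m : Type*} [Fintype m] (A B : Matrix m m NNReal) (z : m → NNReal) (i : m) :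
    mVec (mProd A B) z i = mVec A (mVec B z) i := by
  show (Finset.univ.sup fun k => (Finset.univ.sup fun j => A i j * B j k) * z k)
      = Finset.univ.sup fun j => A i j * Finset.univ.sup fun k => B j k * z k
  calc (Finset.univ.sup fun k => (Finset.univ.sup fun j => A i j * B j k) * z k)
      = Finset.univ.sup fun k => Finset.univ.sup fun j => A i j * (B j k * z k) := by
        refine Finset.sup_congr rfl fun k _ => ?_
        rw [fsup_mul]
        exact Finset.sup_congr rfl fun j _ => (mul_assoc _ _ _)
    _ = Finset.univ.sup fun j => Finset.univ.sup fun k => A i j * (B j k * z k) :=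
        Finset.sup_comm _ _ _
    _ = Finset.univ.sup fun j => A i j * Finset.univ.sup fun k => B j k * z k := by
        refine Finset.sup_congr rfl fun j _ => ?_
        rw [mul_fsup]

lemma mVec_mono {m : Type*} [Fintype m] (A : Matrix m m NNReal) {z w : m → NNReal}
    (h : ∀ j, z j ≤ w j) (i : m) : mVec A z i ≤ mVec A w i :=
  Finset.sup_le fun k _ =>
    le_trans (mul_le_mul_right (h k) (A i k))
      (Finset.le_sup (f := fun k => A i k * w k) (Finset.mem_univ k))

lemma eta_rpow (η : NNReal) (d : ℕ) (hd : 1 ≤ d) :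
    (η ^ d : NNReal) ^ ((d : ℝ)⁻¹) = η := by
  have hd0 : (d : ℝ) ≠ 0 := Nat.cast_ne_zero.mpr (by omega)
  rw [← NNReal.rpow_natCast η d, ← NNReal.rpow_mul, mul_inv_cancel₀ hd0, NNReal.rpow_one]

theorem stmt_10 (n : ℕ) (A : Matrix (Fin n) (Fin n) NNReal) (hA : MaxIrreducible A) :
    (∀ η₁ : NNReal, ∀ z : Fin n → NNReal, 0 < η₁ → z ≠ 0 →
      (∀ i, η₁ * z i ≤ mVec A z i) → η₁ ≤ mu A) ∧
    (∀ η₂ : NNReal, ∀ z : Fin n → NNReal, 0 < η₂ → z ≠ 0 →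
      (∀ i, mVec A z i ≤ η₂ * z i) → mu A ≤ η₂) := by
  constructor
  · -- Part 1
    intro η₁ z hη hz h
    obtain ⟨i0, hi0'⟩ : ∃ i, z i ≠ 0 := Function.ne_iff.mp hz
    have hi0 : 0 < z i0 := pos_iff_ne_zero.mpr hi0'
    have step : ∀ j : Fin n, 0 < z j → ∃ k, 0 < z k ∧ η₁ * z j ≤ A j k * z k := by
      intro j hj
      have hne : (Finset.univ : Finset (Fin n)).Nonempty := ⟨j, Finset.mem_univ j⟩
      obtain ⟨k, -, hk⟩ := Finset.exists_mem_eq_sup Finset.univ hne (fun k => A j k * z k)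
      have h2 : η₁ * z j ≤ A j k * z k := by rw [← hk]; exact h j
      have h3 : 0 < A j k * z k := lt_of_lt_of_le (mul_pos hη hj) h2
      refine ⟨k, ?_, h2⟩
      refine pos_iff_ne_zero.mpr fun e => ?_
      rw [e, mul_zero] at h3; exact lt_irrefl 0 h3
    let f : {j : Fin n // 0 < z j} → {j : Fin n // 0 < z j} :=
      fun p => ⟨(step p.1 p.2).choose, (step p.1 p.2).choose_spec.1⟩
    let g : ℕ → {j : Fin n // 0 < z j} := fun t => f^[t] ⟨i0, hi0⟩
    have hgs : ∀ t, η₁ * z (g t).1 ≤ A (g t).1 (g (t+1)).1 * z (g (t+1)).1 := by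
      intro t
      have hgt : g (t+1) = f (g t) := Function.iterate_succ_apply' f t _
      rw [hgt]
      exact (step (g t).1 (g t).2).choose_spec.2
    have chain : ∀ d t, η₁ ^ d * z (g t).1 ≤ mPow A d (g t).1 (g (t+d)).1 * z (g (t+d)).1 := by
      intro d
      induction d with
      | zero => intro t; rw [Nat.add_zero]; simp [mPow, Matrix.one_apply_eq]
      | succ d ih =>
        intro t
        have harr : t + 1 + d = t + (d + 1) := by omega
        calc η₁ ^ (d+1) * z (g t).1 = η₁ ^ d * (η₁ * z (g t).1) := by ring
          _ ≤ η₁ ^ d * (A (g t).1 (g (t+1)).1 * z (g (t+1)).1) := mul_le_mul_right (hgs t) _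
          _ = A (g t).1 (g (t+1)).1 * (η₁ ^ d * z (g (t+1)).1) := by ring
          _ ≤ A (g t).1 (g (t+1)).1 * (mPow A d (g (t+1)).1 (g (t+1+d)).1 * z (g (t+1+d)).1) :=
              mul_le_mul_right (ih (t+1)) _
          _ = (A (g t).1 (g (t+1)).1 * mPow A d (g (t+1)).1 (g (t+1+d)).1) * z (g (t+1+d)).1 :=
              (mul_assoc _ _ _).symm
          _ ≤ mPow A (d+1) (g t).1 (g (t+1+d)).1 * z (g (t+1+d)).1 :=
              mul_le_mul_left (Finset.le_sup
                (f := fun k => A (g t).1 k * mPow A d k (g (t+1+d)).1)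
                (Finset.mem_univ (g (t+1)).1)) _
          _ = mPow A (d+1) (g t).1 (g (t+(d+1))).1 * z (g (t+(d+1))).1 := by rw [harr]
    obtain ⟨a, b, hab, heq⟩ :=
      Fintype.exists_ne_map_eq_of_card_lt (fun t : Fin (n+1) => (g t.1).1)
        (by simp)
    -- WLOG a < b
    have main : ∀ a b : Fin (n+1), a < b → (g a.1).1 = (g b.1).1 → η₁ ≤ mu A := by
      intro a b hlt heq
      set d : ℕ := b.1 - a.1 with hd
      have hd1 : 1 ≤ d := by omega
      have hdn : d ≤ n := by omega
      have hadb : a.1 + d = b.1 := by omega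
      set c : Fin n := (g a.1).1 with hc
      have key : η₁ ^ d ≤ mPow A d c c := by
        have h1 := chain d a.1
        rw [hadb, ← heq] at h1
        exact le_of_mul_le_mul_right h1 (g a.1).2
      have h2 : η₁ ≤ (mPow A d c c) ^ ((d:ℝ)⁻¹) := by
        calc η₁ = (η₁ ^ d) ^ ((d:ℝ)⁻¹) := (eta_rpow η₁ d hd1).symm
          _ ≤ (mPow A d c c) ^ ((d:ℝ)⁻¹) :=
            NNReal.rpow_le_rpow key (by positivity)
      refine h2.trans (le_trans (Finset.le_sup
        (f := fun i => (mPow A d i i) ^ ((d:ℝ)⁻¹)) (Finset.mem_univ c)) ?_)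
      exact Finset.le_sup (f := fun ℓ => Finset.univ.sup fun i => (mPow A ℓ i i) ^ ((ℓ : ℝ)⁻¹))
        (by simp [Finset.mem_Icc]; omega)
    rcases hab.lt_or_gt with hlt | hlt
    · exact main a b hlt heq
    · exact main b a hlt heq.symm
  · -- Part 2
    intro η₂ z hη hz h
    obtain ⟨i0, hi0'⟩ : ∃ i, z i ≠ 0 := Function.ne_iff.mp hz
    have hi0 : 0 < z i0 := pos_iff_ne_zero.mpr hi0'
    have hiter : ∀ k i, mVec (mPow A k) z i ≤ η₂ ^ k * z i := by
      intro k
      induction k with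
      | zero =>
        intro i
        show (Finset.univ.sup fun k => (1 : Matrix (Fin n) (Fin n) NNReal) i k * z k) ≤ _
        refine Finset.sup_le fun k _ => ?_
        by_cases hk : i = k
        · simp [Matrix.one_apply, hk]
        · simp [Matrix.one_apply, hk]
      | succ k ih =>
        intro i
        have e1 : mVec (mPow A (k+1)) z i = mVec A (mVec (mPow A k) z) i := mVec_mProd A _ z i
        rw [e1]
        calc mVec A (mVec (mPow A k) z) i ≤ mVec A (fun j => η₂ ^ k * z j) i :=
              mVec_mono A ih i
          _ = η₂ ^ k * mVec A z i := by
              rw [show mVec A z i = Finset.univ.sup (fun j => A i j * z j) from rfl, mul_fsup]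
              exact Finset.sup_congr rfl fun j _ => by ring
          _ ≤ η₂ ^ k * (η₂ * z i) := mul_le_mul_right (h i) _
          _ = η₂ ^ (k+1) * z i := by ring
    have hzpos : ∀ j, 0 < z j := by
      intro j
      obtain ⟨k, hk1, hkpos⟩ := hA j i0
      have h1 : mPow A k j i0 * z i0 ≤ mVec (mPow A k) z j :=
        Finset.le_sup (f := fun l => mPow A k j l * z l) (Finset.mem_univ i0)
      have h2 : 0 < η₂ ^ k * z j := lt_of_lt_of_le (mul_pos hkpos hi0) (h1.trans (hiter k j))
      refine pos_iff_ne_zero.mpr fun e => ?_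
      rw [e, mul_zero] at h2; exact lt_irrefl 0 h2
    refine Finset.sup_le fun ℓ hℓ => Finset.sup_le fun i _ => ?_
    rw [Finset.mem_Icc] at hℓ
    have h1 : mPow A ℓ i i * z i ≤ η₂ ^ ℓ * z i :=
      (Finset.le_sup (Finset.mem_univ i)).trans (hiter ℓ i)
    have h2 : mPow A ℓ i i ≤ η₂ ^ ℓ := le_of_mul_le_mul_right h1 (hzpos i)
    calc (mPow A ℓ i i) ^ ((ℓ:ℝ)⁻¹) ≤ (η₂ ^ ℓ) ^ ((ℓ:ℝ)⁻¹) :=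
          NNReal.rpow_le_rpow h2 (by positivity)
      _ = η₂ := eta_rpow η₂ ℓ hℓ.1
end
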